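/- arXiv:1910.03471 — 2 statements merged into one kernel-verified Lean document; each statement's English description precedes it below -/
import Mathlib

section
/- (Theorem 1, fixed-point case, derivatives with respect to W.) Let (z_t)_{t\ge 1} be an orbit of F, i.e. z_{t+1} = F(z_t), and assume z_t converges to a fixed point z^* of F with z^*_i \ne 0 for all i, and that \|W_\Omega(z^*)\|_2 < 1. Fix m, k \in \{1,\dots,M\}, let e_m denote the m-th standard basis vector, and define the derivative sequence (G_t)_{t\ge 1} (which equals \partial z_t / \partial W_{mk}) by G_1 = 0 and G_{t+1} = \varphi(z_t)_k\, e_m + W_\Omega(z_t)\, G_t. Then \sup_{t} \|G_t\| < \infty, i.e. the gradient of the state with respect to the recurrent weight W_{mk} does not diverge as t \to \infty. -/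
/-! `W_Ω(z)` depends on `z` only through its sign pattern, which for large `t` is that of `z*`
because no component of `z*` vanishes. So eventually `W_Ω(z_t) = W_Ω(z*)`, and
`‖G_{t+1}‖ ≤ b + q ‖G_t‖` with `q = ‖W_Ω(z*)‖₂ < 1` and `b` bounding `φ(z_t)_k`; an affine
recursion with contraction factor `q < 1` stays bounded. -/

open Matrix Filter Topology

/-- The operator 2-norm (largest singular value) of a real matrix. -/
noncomputable def opNorm2 {m n : Type*} [Fintype m] [Fintype n] [DecidableEq n]
    (A : Matrix m n ℝ) : ℝ :=
  ‖LinearMap.toContinuousLinearMap (Matrix.toEuclideanLin (𝕜 := ℝ) A)‖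

/-- Euclidean norm of a real vector. -/
noncomputable def vnorm {n : Type*} [Fintype n] (v : n → ℝ) : ℝ :=
  Real.sqrt (∑ i, v i ^ 2)

/-- Componentwise ReLU. -/
noncomputable def relu {n : Type*} (z : n → ℝ) : n → ℝ := fun i => max 0 (z i)

/-- `Dmat z` is the diagonal 0–1 matrix with `(Dmat z) i i = 1` iff `z i > 0`. -/
noncomputable def Dmat {n : Type*} [Fintype n] [DecidableEq n] (z : n → ℝ) :
    Matrix n n ℝ :=
  Matrix.diagonal (fun i => if 0 < z i then (1 : ℝ) else 0)

/-- `W_Ω(z) = A + W D(z)`. -/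
noncomputable def Wom {n : Type*} [Fintype n] [DecidableEq n]
    (A W : Matrix n n ℝ) (z : n → ℝ) : Matrix n n ℝ :=
  A + W * Dmat z

/-- The deterministic, input-free PLRNN map `F(z) = A z + W φ(z) + h`. -/
noncomputable def plrnn {n : Type*} [Fintype n] [DecidableEq n]
    (A W : Matrix n n ℝ) (h : n → ℝ) (z : n → ℝ) : n → ℝ :=
  A.mulVec z + W.mulVec (relu z) + h

section vnorm

variable {n : Type*} [Fintype n]

lemma vnorm_eq_norm_toLp (v : n → ℝ) : vnorm v = ‖WithLp.toLp 2 v‖ := by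
  simp only [vnorm, EuclideanSpace.norm_eq, Real.norm_eq_abs, sq_abs]

lemma vnorm_add_le (u v : n → ℝ) : vnorm (u + v) ≤ vnorm u + vnorm v := by
  simpa only [vnorm_eq_norm_toLp, WithLp.toLp_add] using norm_add_le _ _

lemma vnorm_smul (c : ℝ) (v : n → ℝ) : vnorm (c • v) = |c| * vnorm v := by
  simp only [vnorm_eq_norm_toLp, WithLp.toLp_smul, norm_smul, Real.norm_eq_abs]

lemma vnorm_single_one [DecidableEq n] (i : n) : vnorm (Pi.single i (1 : ℝ)) = 1 := by
  rw [vnorm_eq_norm_toLp]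
  exact (PiLp.norm_single 2 (fun _ => ℝ) i (1 : ℝ)).trans norm_one

lemma vnorm_mulVec_le {m : Type*} [Fintype m] [DecidableEq n] (A : Matrix m n ℝ) (v : n → ℝ) :
    vnorm (A *ᵥ v) ≤ opNorm2 A * vnorm v := by
  rw [vnorm_eq_norm_toLp, vnorm_eq_norm_toLp]
  exact (LinearMap.toContinuousLinearMap (Matrix.toEuclideanLin (𝕜 := ℝ) A)).le_opNorm
      (WithLp.toLp 2 v)

end vnorm

lemma eventually_dmat_eq {ι n : Type*} [Fintype n] [DecidableEq n] {l : Filter ι}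
    {z : ι → n → ℝ} {zstar : n → ℝ} (hconv : Tendsto z l (𝓝 zstar))
    (hnz : ∀ i, zstar i ≠ 0) : ∀ᶠ t in l, Dmat (z t) = Dmat zstar := by
  have hsign : ∀ᶠ t in l, ∀ i, (0 < z t i ↔ 0 < zstar i) := by
    refine eventually_all.2 fun i => ?_
    have hzi := tendsto_pi_nhds.1 hconv i
    rcases (hnz i).lt_or_gt with hneg | hpos
    · filter_upwards [hzi.eventually_lt_const hneg] with t ht
      exact iff_of_false ht.asymm hneg.asymm
    · filter_upwards [hzi.eventually_const_lt hpos] with t ht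
      exact iff_of_true ht hpos
  filter_upwards [hsign] with t ht
  exact congrArg Matrix.diagonal (funext fun i => if_congr (ht i) rfl rfl)

lemma exists_forall_le_of_eventually_le_add_mul {x : ℕ → ℝ} {b q : ℝ} (hq0 : 0 ≤ q)
    (hq1 : q < 1) (hrec : ∀ᶠ t in atTop, x (t + 1) ≤ b + q * x t) : ∃ C, ∀ t, x t ≤ C := by
  obtain ⟨N, hN⟩ := eventually_atTop.1 hrec
  -- `b / (1 - q)` is the fixed point of `y ↦ b + q y`, so the tail never climbs above `C₀`.
  set C₀ := max (x N) (b / (1 - q))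
  have hb : b ≤ (1 - q) * C₀ := by
    rw [← div_le_iff₀' (by linarith)]
    exact le_max_right _ _
  have htail : ∀ j, x (N + j) ≤ C₀ := by
    intro j
    induction j with
    | zero => exact le_max_left _ _
    | succ j ih =>
      calc x (N + j + 1) ≤ b + q * x (N + j) := hN _ (Nat.le_add_right N j)
        _ ≤ b + q * C₀ := by gcongr
        _ ≤ C₀ := by linarith
  obtain ⟨C, hC⟩ := IsBoundedUnder.bddAbove_range (isBoundedUnder_of_eventually_le
    (eventually_atTop.2 ⟨N, fun t ht => Nat.add_sub_cancel' ht ▸ htail (t - N)⟩))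
  exact ⟨C, fun t => hC ⟨t, rfl⟩⟩

theorem gradients_wrt_W_bounded_general {M : ℕ} (A W : Matrix (Fin M) (Fin M) ℝ)
    (z : ℕ → Fin M → ℝ)
    (zstar : Fin M → ℝ)
    (hconv : Tendsto z atTop (𝓝 zstar)) (hnz : ∀ i, zstar i ≠ 0)
    (hnorm : opNorm2 (Wom A W zstar) < 1)
    (m k : Fin M) (G : ℕ → Fin M → ℝ)
    (hGrec : ∀ t, 1 ≤ t →
      G (t + 1) = relu (z t) k • (Pi.single m 1 : Fin M → ℝ) + (Wom A W (z t)).mulVec (G t)) :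
    ∃ C : ℝ, ∀ t, vnorm (G t) ≤ C := by
  have hrelu : ∀ᶠ t in atTop, relu (z t) k < relu zstar k + 1 :=
    (tendsto_const_nhds.max (tendsto_pi_nhds.1 hconv k) :
      Tendsto (fun t => relu (z t) k) atTop (𝓝 (relu zstar k))).eventually_lt_const
      (lt_add_one _)
  have hstep : ∀ᶠ t in atTop,
      vnorm (G (t + 1)) ≤ (relu zstar k + 1) + opNorm2 (Wom A W zstar) * vnorm (G t) := by
    filter_upwards [eventually_dmat_eq hconv hnz, hrelu, eventually_ge_atTop 1]
      with t hD hr ht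
    have hWom : Wom A W (z t) = Wom A W zstar := by rw [Wom, Wom, hD]
    calc vnorm (G (t + 1))
        ≤ vnorm (relu (z t) k • Pi.single m 1) + vnorm (Wom A W zstar *ᵥ G t) := by
          rw [hGrec t ht, hWom]
          exact vnorm_add_le _ _
      _ ≤ (relu zstar k + 1) + opNorm2 (Wom A W zstar) * vnorm (G t) := by
          rw [vnorm_smul, vnorm_single_one, mul_one, abs_of_nonneg (le_max_left _ _)]
          exact add_le_add hr.le (vnorm_mulVec_le _ _)
  exact exists_forall_le_of_eventually_le_add_mul (norm_nonneg _) hnorm hstep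

/-- Theorem 1, fixed-point case, derivatives w.r.t. `W`: along an orbit
converging to a stable fixed point `z*` with no zero component and `‖W_Ω(z*)‖₂ < 1`, the
derivative sequence `G` of the states w.r.t. the weight `W m k` (satisfying `G 1 = 0` and
`G (t+1) = φ(z t)_k e_m + W_Ω(z t) G t`) is bounded in norm. -/
theorem gradients_wrt_W_bounded {M : ℕ} (A W : Matrix (Fin M) (Fin M) ℝ)
    (hA : A.IsDiag) (hWd : ∀ i, W i i = 0) (h : Fin M → ℝ)
    (z : ℕ → Fin M → ℝ) (horb : ∀ t, 1 ≤ t → z (t + 1) = plrnn A W h (z t))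
    (zstar : Fin M → ℝ) (hfix : plrnn A W h zstar = zstar)
    (hconv : Tendsto z atTop (𝓝 zstar)) (hnz : ∀ i, zstar i ≠ 0)
    (hnorm : opNorm2 (Wom A W zstar) < 1)
    (m k : Fin M) (G : ℕ → Fin M → ℝ) (hG1 : G 1 = 0)
    (hGrec : ∀ t, 1 ≤ t →
      G (t + 1) = relu (z t) k • (Pi.single m 1 : Fin M → ℝ) + (Wom A W (z t)).mulVec (G t)) :
    ∃ C : ℝ, ∀ t, vnorm (G t) ≤ C :=
  gradients_wrt_W_bounded_general A W z zstar hconv hnz hnorm m k G hGrec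
end

section
/- (Theorem 2: limiting norm of Jacobian products.) Let (z_t)_{t\ge 1} be an orbit of the regularized PLRNN, i.e. z_{t+1} = F(z_t), fix t \ge 1, and suppose: (i) there is a constant c < 1 with \|R(z_k)\|_2 \le c for all k > t; (ii) there exists N > t and a fixed diagonal 0–1 matrix D^* of size M_{reg} and a matrix R^* with D_{reg}(z_k) = D^* for all k \ge N and R(z_k) \to R^* as k \to \infty. Then, as T \to \infty, the ordered product W_\Omega(z_T)\, W_\Omega(z_{T-1}) \cdots W_\Omega(z_{t+1}) converges to the block matrix [[I_{M_{reg}}, 0], [Q^*, 0]] with Q^* = (I - R^*)^{-1} S D^*, and \|W_\Omega(z_T) \cdots W_\Omega(z_{t+1})\|_2 \to \sqrt{\lambda_{max}(I_{M_{reg}} + (Q^*)^{\mathsf T} Q^*)} \ge 1. -/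
open Matrix Filter Topology

/-- The largest (real) eigenvalue of a real square matrix, as the supremum of its real
spectrum. -/
noncomputable def lambdaMax {n : Type*} [Fintype n] [DecidableEq n] (A : Matrix n n ℝ) : ℝ :=
  sSup (spectrum ℝ A)

/-!
Every Jacobian `W_Ω(z)` is block lower triangular with identity upper-left block, so the ordered
product after `n` steps is `[[I, 0], [Qₙ, Pₙ]]` with `Pₙ₊₁ = Rₙ Pₙ` and `Qₙ₊₁ = S Dₙ + Rₙ Qₙ`.
Since `‖Rₙ‖ ≤ c < 1`, the errors to the fixed point `Q* = S D* + R* Q*` contract up to a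
vanishing perturbation, so `Pₙ → 0` and `Qₙ → Q*`. The limit `[[I, 0], [Q*, 0]]` has the norm of
its first block column `[I; Q*]`, whose square is `‖I + Q*ᵀ Q*‖ = λ_max(I + Q*ᵀ Q*)`; projecting
`[I; Q*]` onto its top block gives `I`, so this norm is at least `1`.
-/

open scoped Matrix.Norms.L2Operator ComplexOrder

lemma tendsto_zero_of_le_mul_add {u ε : ℕ → ℝ} {c : ℝ} (hc₀ : 0 ≤ c) (hc : c < 1)
    (hu : ∀ n, 0 ≤ u n) (hε : Tendsto ε atTop (𝓝 0))
    (hrec : ∀ᶠ n in atTop, u (n + 1) ≤ c * u n + ε n) :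
    Tendsto u atTop (𝓝 0) := by
  refine tendsto_order.2 ⟨fun a ha => Eventually.of_forall fun n => ha.trans_le (hu n),
    fun δ hδ => ?_⟩
  obtain ⟨N, hN⟩ := eventually_atTop.1
    (hrec.and (hε.eventually (gt_mem_nhds (by nlinarith : (0 : ℝ) < (1 - c) * (δ / 2)))))
  have hbound : ∀ k, u (N + k) ≤ c ^ k * u N + δ / 2 := by
    intro k
    induction k with
    | zero => simp only [add_zero, pow_zero, one_mul]; linarith
    | succ k ih =>
      obtain ⟨hstep, hsmall⟩ := hN (N + k) (Nat.le_add_right _ _)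
      calc u (N + (k + 1)) ≤ c * u (N + k) + ε (N + k) := hstep
        _ ≤ c * (c ^ k * u N + δ / 2) + (1 - c) * (δ / 2) := by gcongr
        _ = c ^ (k + 1) * u N + δ / 2 := by ring
  have hpow : ∀ᶠ k in atTop, c ^ k * u N < δ / 2 := by
    have := (tendsto_pow_atTop_nhds_zero_of_lt_one hc₀ hc).mul_const (u N)
    rw [zero_mul] at this
    exact this.eventually (gt_mem_nhds (half_pos hδ))
  obtain ⟨K, hK⟩ := eventually_atTop.1 hpow
  refine eventually_atTop.2 ⟨N + K, fun n hn => ?_⟩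
  obtain ⟨k, rfl⟩ := Nat.exists_eq_add_of_le (le_of_add_le_left hn)
  linarith [hbound k, hK k (by omega)]

namespace Matrix

variable {𝕜 : Type*} [RCLike 𝕜] {m n n' : Type*} [Fintype m] [Fintype n] [Fintype n']
  [DecidableEq m] [DecidableEq n]

theorem tendsto_of_affine_recursion {R : ℕ → Matrix n n 𝕜} {B Q : ℕ → Matrix n m 𝕜}
    {Rlim : Matrix n n 𝕜} {Blim : Matrix n m 𝕜} {c : ℝ} (hc : c < 1) (hR : ∀ k, ‖R k‖ ≤ c)
    (hRt : Tendsto R atTop (𝓝 Rlim)) (hBt : Tendsto B atTop (𝓝 Blim))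
    (hQ : ∀ k, Q (k + 1) = B k + R k * Q k) :
    Tendsto Q atTop (𝓝 ((1 - Rlim)⁻¹ * Blim)) := by
  set X := (1 - Rlim)⁻¹ * Blim
  have hc₀ : 0 ≤ c := (norm_nonneg _).trans (hR 0)
  have hunit : IsUnit (1 - Rlim) :=
    isUnit_one_sub_of_norm_lt_one ((le_of_tendsto' hRt.norm hR).trans_lt hc)
  have hfix : X = Blim + Rlim * X := by
    have : (1 - Rlim) * X = Blim := by
      rw [← Matrix.mul_assoc, mul_nonsing_inv _ ((isUnit_iff_isUnit_det _).mp hunit),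
        Matrix.one_mul]
    rw [Matrix.sub_mul, Matrix.one_mul, sub_eq_iff_eq_add] at this
    exact this
  have herr : ∀ k, Q (k + 1) - X = R k * (Q k - X) + ((B k - Blim) + (R k - Rlim) * X) := by
    intro k
    rw [hQ k, Matrix.mul_sub, Matrix.sub_mul]
    conv_lhs => rw [hfix]
    abel
  have hε : Tendsto (fun k => ‖B k - Blim‖ + ‖R k - Rlim‖ * ‖X‖) atTop (𝓝 0) := by
    simpa using (tendsto_iff_norm_sub_tendsto_zero.1 hBt).add
      ((tendsto_iff_norm_sub_tendsto_zero.1 hRt).mul_const ‖X‖)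
  refine tendsto_iff_norm_sub_tendsto_zero.2 (tendsto_zero_of_le_mul_add hc₀ hc
    (fun _ => norm_nonneg _) hε (Eventually.of_forall fun k => ?_))
  rw [herr k]
  calc _ ≤ ‖R k * (Q k - X)‖ + (‖B k - Blim‖ + ‖(R k - Rlim) * X‖) :=
        (norm_add_le _ _).trans (by gcongr; exact norm_add_le _ _)
    _ ≤ c * ‖Q k - X‖ + (‖B k - Blim‖ + ‖R k - Rlim‖ * ‖X‖) := by
        gcongr
        · exact (l2_opNorm_mul _ _).trans (by gcongr; exact hR k)
        · exact l2_opNorm_mul _ _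

theorem tendsto_of_fromBlocks_recursion {G : ℕ → Matrix (m ⊕ n) (m ⊕ n) 𝕜}
    {B : ℕ → Matrix n m 𝕜} {R : ℕ → Matrix n n 𝕜} {Blim : Matrix n m 𝕜} {Rlim : Matrix n n 𝕜}
    {c : ℝ} (hc : c < 1) (hR : ∀ k, ‖R k‖ ≤ c) (hRt : Tendsto R atTop (𝓝 Rlim))
    (hBt : Tendsto B atTop (𝓝 Blim)) (hG₀ : G 0 = 1)
    (hG : ∀ k, G (k + 1) = fromBlocks 1 0 (B k) (R k) * G k) :
    Tendsto G atTop (𝓝 (fromBlocks 1 0 ((1 - Rlim)⁻¹ * Blim) 0)) := by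
  have hform : ∀ k, ∃ Q P, G k = fromBlocks 1 0 Q P := by
    intro k
    induction k with
    | zero => exact ⟨0, 1, hG₀.trans fromBlocks_one.symm⟩
    | succ k ih =>
      obtain ⟨Q, P, hQP⟩ := ih
      exact ⟨B k + R k * Q, R k * P, by rw [hG, hQP, fromBlocks_multiply]; simp⟩
  choose Q P hQP using hform
  have hrec : ∀ k, Q (k + 1) = B k + R k * Q k ∧ P (k + 1) = 0 + R k * P k := by
    intro k
    have h := (hQP (k + 1)).symm.trans (hG k)
    rw [hQP k, fromBlocks_multiply] at h
    simpa [fromBlocks_inj] using h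
  have hQt := tendsto_of_affine_recursion hc hR hRt hBt fun k => (hrec k).1
  have hPt := tendsto_of_affine_recursion hc hR hRt tendsto_const_nhds fun k => (hrec k).2
  rw [Matrix.mul_zero] at hPt
  rw [show G = fun k => fromBlocks 1 0 (Q k) (P k) from funext hQP]
  exact ((continuous_const.matrix_fromBlocks continuous_const continuous_fst
    continuous_snd).tendsto _).comp (hQt.prodMk_nhds hPt)

lemma l2_opNorm_fromCols_zero [DecidableEq n'] (B : Matrix m n 𝕜) :
    ‖fromCols B (0 : Matrix m n' 𝕜)‖ = ‖B‖ := by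
  have hC := l2_opNorm_conjTranspose_mul_self (fromCols B (0 : Matrix m n' 𝕜))ᴴ
  have hB := l2_opNorm_conjTranspose_mul_self Bᴴ
  rw [conjTranspose_conjTranspose, l2_opNorm_conjTranspose,
    conjTranspose_fromCols_eq_fromRows_conjTranspose, fromCols_mul_fromRows, conjTranspose_zero,
    Matrix.zero_mul, add_zero] at hC
  rw [conjTranspose_conjTranspose, l2_opNorm_conjTranspose] at hB
  exact (mul_self_inj (norm_nonneg _) (norm_nonneg _)).mp (hC.symm.trans hB)

lemma l2_opNorm_eq_sSup_spectrum_of_posSemidef [Nonempty m] {X : Matrix m m 𝕜}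
    (hX : X.PosSemidef) : ‖X‖ = sSup (spectrum ℝ X) := by
  have hev : ∀ i, ‖(hX.isHermitian.eigenvalues i : 𝕜)‖ = hX.isHermitian.eigenvalues i :=
    fun i => by rw [RCLike.norm_ofReal, abs_of_nonneg (hX.eigenvalues_nonneg i)]
  have hbdd := (Set.finite_range hX.isHermitian.eigenvalues).bddAbove
  conv_lhs => rw [hX.isHermitian.spectral_theorem]
  rw [Unitary.conjStarAlgAut_apply, ← Unitary.coe_star, CStarRing.norm_mul_coe_unitary,
    CStarRing.norm_coe_unitary_mul, l2_opNorm_diagonal,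
    hX.isHermitian.spectrum_real_eq_range_eigenvalues]
  apply le_antisymm
  · refine (pi_norm_le_iff_of_nonneg ?_).mpr fun i => ?_
    · exact (hX.eigenvalues_nonneg (Classical.arbitrary m)).trans (le_csSup hbdd ⟨_, rfl⟩)
    · rw [Function.comp_apply, hev]
      exact le_csSup hbdd ⟨i, rfl⟩
  · refine csSup_le (Set.range_nonempty _) ?_
    rintro _ ⟨i, rfl⟩
    simpa only [Function.comp_apply, hev] using
      norm_le_pi_norm (RCLike.ofReal ∘ hX.isHermitian.eigenvalues : m → 𝕜) i

lemma l2_opNorm_fromRows_one [Nonempty m] (Q : Matrix n' m 𝕜) :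
    ‖fromRows (1 : Matrix m m 𝕜) Q‖ = √(sSup (spectrum ℝ (1 + Qᴴ * Q))) := by
  have hX : (1 + Qᴴ * Q).PosSemidef := PosSemidef.one.add (posSemidef_conjTranspose_mul_self Q)
  rw [← l2_opNorm_eq_sSup_spectrum_of_posSemidef hX]
  have h := l2_opNorm_conjTranspose_mul_self (fromRows (1 : Matrix m m 𝕜) Q)
  rw [conjTranspose_fromRows_eq_fromCols_conjTranspose, fromCols_mul_fromRows, conjTranspose_one,
    Matrix.one_mul] at h
  rw [h, Real.sqrt_mul_self (norm_nonneg _)]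

lemma one_le_l2_opNorm_fromRows_one [DecidableEq n'] [Nonempty m] (Q : Matrix n' m 𝕜) :
    1 ≤ ‖fromRows (1 : Matrix m m 𝕜) Q‖ := by
  have h := l2_opNorm_mul (fromCols (1 : Matrix m m 𝕜) (0 : Matrix m n' 𝕜)) (fromRows 1 Q)
  rwa [fromCols_mul_fromRows, Matrix.one_mul, Matrix.zero_mul, add_zero, l2_opNorm_fromCols_zero,
    CStarRing.norm_one, one_mul] at h

end Matrix

lemma Wom_eq_fromBlocks {m n : Type*} [Fintype m] [Fintype n] [DecidableEq m] [DecidableEq n]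
    {A W : Matrix (m ⊕ n) (m ⊕ n) ℝ} (hA : A.IsDiag)
    (hAreg : ∀ i : m, A (Sum.inl i) (Sum.inl i) = 1)
    (hWreg : ∀ (i : m) (j : m ⊕ n), W (Sum.inl i) j = 0) (v : m ⊕ n → ℝ) :
    Wom A W v = fromBlocks 1 0 (W.toBlocks₂₁ * (Dmat v).toBlocks₁₁) (Wom A W v).toBlocks₂₂ := by
  ext (i | i) (j | j)
  · rcases eq_or_ne i j with rfl | hij
    · simp [Wom, Dmat, mul_diagonal, hAreg, hWreg]
    · simp [Wom, Dmat, mul_diagonal, hWreg, hij, hA (Sum.inl_injective.ne hij)]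
  · simp [Wom, Dmat, mul_diagonal, hWreg, hA Sum.inl_ne_inr]
  · simp [Wom, Dmat, mul_diagonal, toBlocks₂₁, hA Sum.inr_ne_inl]
  · rfl

lemma List.prod_map_range_sub_succ {M : Type*} [Monoid M] (J : ℕ → M) {t T : ℕ} (hT : t ≤ T) :
    ((List.range (T + 1 - t)).map fun i => J (T + 1 - i)).prod
      = J (T + 1) * ((List.range (T - t)).map fun i => J (T - i)).prod := by
  rw [Nat.sub_add_comm hT, List.range_succ_eq_map, List.map_cons, List.prod_cons, List.map_map]
  congr 2
  exact List.map_congr_left fun i _ => congrArg J (by omega)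

theorem regularized_jacobian_products_limit_general {p q : ℕ} (hp : 1 ≤ p)
    (A W : Matrix (Fin p ⊕ Fin q) (Fin p ⊕ Fin q) ℝ)
    (hA : A.IsDiag) (hAreg : ∀ i : Fin p, A (Sum.inl i) (Sum.inl i) = 1)
    (hWreg : ∀ (i : Fin p) (j : Fin p ⊕ Fin q), W (Sum.inl i) j = 0)
    (z : ℕ → Fin p ⊕ Fin q → ℝ)
    (t : ℕ) (c : ℝ) (hc : c < 1)
    (hR : ∀ k, t < k → opNorm2 ((Wom A W (z k)).toBlocks₂₂) ≤ c)
    (N : ℕ) (Dstar : Matrix (Fin p) (Fin p) ℝ)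
    (hD : ∀ k, N ≤ k → (Dmat (z k)).toBlocks₁₁ = Dstar)
    (Rstar : Matrix (Fin q) (Fin q) ℝ)
    (hRconv : Tendsto (fun k => (Wom A W (z k)).toBlocks₂₂) atTop (𝓝 Rstar)) :
    Tendsto (fun T => ((List.range (T - t)).map (fun i => Wom A W (z (T - i)))).prod)
        atTop
        (𝓝 (Matrix.fromBlocks 1 0 ((1 - Rstar)⁻¹ * W.toBlocks₂₁ * Dstar) 0))
    ∧ Tendsto
        (fun T => opNorm2 (((List.range (T - t)).map (fun i => Wom A W (z (T - i)))).prod))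
        atTop
        (𝓝 (Real.sqrt (lambdaMax
          (1 + ((1 - Rstar)⁻¹ * W.toBlocks₂₁ * Dstar)ᵀ
            * ((1 - Rstar)⁻¹ * W.toBlocks₂₁ * Dstar)))))
    ∧ 1 ≤ Real.sqrt (lambdaMax
          (1 + ((1 - Rstar)⁻¹ * W.toBlocks₂₁ * Dstar)ᵀ
            * ((1 - Rstar)⁻¹ * W.toBlocks₂₁ * Dstar))) := by
  have : Nonempty (Fin p) := Fin.pos_iff_nonempty.mp hp
  set Q := (1 - Rstar)⁻¹ * W.toBlocks₂₁ * Dstar with hQ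
  set P := fun T => ((List.range (T - t)).map fun i => Wom A W (z (T - i))).prod
  set Rz := fun k => (Wom A W (z k)).toBlocks₂₂
  have hRz : ∀ k, ‖Rz (t + k + 1)‖ ≤ c := fun k => hR (t + k + 1) (by omega)
  have hRzt : Tendsto (fun k => Rz (t + k + 1)) atTop (𝓝 Rstar) :=
    hRconv.comp ((tendsto_add_atTop_nat (t + 1)).congr fun k => by omega)
  have hBt : Tendsto (fun k => W.toBlocks₂₁ * (Dmat (z (t + k + 1))).toBlocks₁₁) atTop
      (𝓝 (W.toBlocks₂₁ * Dstar)) := by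
    refine tendsto_const_nhds.congr' ?_
    filter_upwards [eventually_ge_atTop N] with k hk
    rw [hD _ (by omega)]
  have hshift : Tendsto (fun k => P (t + k)) atTop (𝓝 (fromBlocks 1 0 Q 0)) := by
    rw [hQ, Matrix.mul_assoc]
    refine tendsto_of_fromBlocks_recursion hc hRz hRzt hBt (by simp [P]) fun k => ?_
    rw [← Wom_eq_fromBlocks hA hAreg hWreg]
    exact List.prod_map_range_sub_succ (fun k => Wom A W (z k)) (Nat.le_add_right t k)
  have hP : Tendsto P atTop (𝓝 (fromBlocks 1 0 Q 0)) :=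
    (hshift.comp (tendsto_sub_atTop_nat t)).congr' <| by
      filter_upwards [eventually_ge_atTop t] with T hT
      simp only [Function.comp_apply, Nat.add_sub_cancel' hT]
  have hnorm : ‖fromBlocks (1 : Matrix (Fin p) (Fin p) ℝ) 0 Q (0 : Matrix (Fin q) (Fin q) ℝ)‖
      = ‖fromRows (1 : Matrix (Fin p) (Fin p) ℝ) Q‖ := by
    rw [← fromCols_fromRows_eq_fromBlocks, fromRows_zero, l2_opNorm_fromCols_zero]
  rw [lambdaMax, ← conjTranspose_eq_transpose_of_trivial, ← l2_opNorm_fromRows_one, ← hnorm]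
  exact ⟨hP, hP.norm, hnorm ▸ one_le_l2_opNorm_fromRows_one Q⟩

/-- Theorem 2: limiting norm of Jacobian products. In the regularized PLRNN
(states `Fin p ⊕ Fin q`, regularized block `Fin p`), if `‖R(z k)‖₂ ≤ c < 1` for `k > t`,
`D_reg(z k)` is eventually constant `= D*`, and `R(z k) → R*`, then the ordered Jacobian
product `W_Ω(z T) ⋯ W_Ω(z (t+1))` converges to `[[I, 0], [Q*, 0]]` with
`Q* = (I - R*)⁻¹ S D*`, and its operator 2-norm converges to
`√(λ_max(I + Q*ᵀ Q*)) ≥ 1`. -/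
theorem regularized_jacobian_products_limit {p q : ℕ} (hp : 1 ≤ p) (hq : 1 ≤ q)
    (A W : Matrix (Fin p ⊕ Fin q) (Fin p ⊕ Fin q) ℝ)
    (hA : A.IsDiag) (hAreg : ∀ i : Fin p, A (Sum.inl i) (Sum.inl i) = 1)
    (hWd : ∀ i, W i i = 0) (hWreg : ∀ (i : Fin p) (j : Fin p ⊕ Fin q), W (Sum.inl i) j = 0)
    (h : Fin p ⊕ Fin q → ℝ)
    (z : ℕ → Fin p ⊕ Fin q → ℝ) (horb : ∀ t', 1 ≤ t' → z (t' + 1) = plrnn A W h (z t'))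
    (t : ℕ) (ht : 1 ≤ t) (c : ℝ) (hc : c < 1)
    (hR : ∀ k, t < k → opNorm2 ((Wom A W (z k)).toBlocks₂₂) ≤ c)
    (N : ℕ) (hN : t < N) (Dstar : Matrix (Fin p) (Fin p) ℝ)
    (hD : ∀ k, N ≤ k → (Dmat (z k)).toBlocks₁₁ = Dstar)
    (Rstar : Matrix (Fin q) (Fin q) ℝ)
    (hRconv : Tendsto (fun k => (Wom A W (z k)).toBlocks₂₂) atTop (𝓝 Rstar)) :
    Tendsto (fun T => ((List.range (T - t)).map (fun i => Wom A W (z (T - i)))).prod)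
        atTop
        (𝓝 (Matrix.fromBlocks 1 0 ((1 - Rstar)⁻¹ * W.toBlocks₂₁ * Dstar) 0))
    ∧ Tendsto
        (fun T => opNorm2 (((List.range (T - t)).map (fun i => Wom A W (z (T - i)))).prod))
        atTop
        (𝓝 (Real.sqrt (lambdaMax
          (1 + ((1 - Rstar)⁻¹ * W.toBlocks₂₁ * Dstar)ᵀ
            * ((1 - Rstar)⁻¹ * W.toBlocks₂₁ * Dstar)))))
    ∧ 1 ≤ Real.sqrt (lambdaMax
          (1 + ((1 - Rstar)⁻¹ * W.toBlocks₂₁ * Dstar)ᵀ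
            * ((1 - Rstar)⁻¹ * W.toBlocks₂₁ * Dstar))) :=
  regularized_jacobian_products_limit_general hp A W hA hAreg hWreg z t c hc hR N Dstar hD Rstar
    hRconv
end
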